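/- Let ∅ ≠ I' ⊆ ℝⁿ and ∅ ≠ I ⊆ ℝⁿ with I + I' ⊆ I and τ + I = I for every τ ∈ I', let X, Y be complex Banach spaces, let 𝓑 be a nonempty collection of nonempty subsets of X whose union is X, and let ρ be a binary relation on Y such that the range of F is contained in the domain of ρ and ρ(y) is a singleton for every y in the range of F. Let 𝒫 = (P,d) be a metric space where P is a set of functions from I to Y containing 0, P is closed under addition and scalar multiplication, and d is translation invariant (d(f+g,h+g) = d(f,h) whenever f,h,f+g,h+g ∈ P), and suppose the following condition (P) holds: 𝒫₁ = (P₁,d₁) is a metric space with P₁ a set of functions from I to Y containing 0, there exists c ∈ (0,∞) such that for every f ∈ P and τ ∈ I' the function f(·−τ) belongs to P₁ and ‖f(·−τ)‖_{P₁} ≤ c‖f‖_P. If F : I × X → Y is Bohr (𝓑,I',ρ,𝒫)-almost periodic, then I + (I'−I') ⊆ I and F is Bohr (𝓑,I'−I',𝐈,𝒫₁)-almost periodic, where 𝐈 denotes the identity relation on Y. -/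

import Mathlib

noncomputable section

/-- `d` is a metric on the set `P` of functions. -/
def IsMetricOn {α Y : Type*} (P : Set (α → Y)) (d : (α → Y) → (α → Y) → ℝ) : Prop :=
  (∀ f ∈ P, d f f = 0) ∧ (∀ f ∈ P, ∀ g ∈ P, d f g = 0 → f = g) ∧
    (∀ f ∈ P, ∀ g ∈ P, d f g = d g f) ∧
    (∀ f ∈ P, ∀ g ∈ P, ∀ h ∈ P, d f h ≤ d f g + d g h)

/-- Bohr `(𝓑,I',ρ,𝒫)`-almost periodicity of `F : I × X → Y`, where `𝒫 = (P,d)` is a metric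
space of functions from `I` to `Y` with `‖f‖_P := d(f,0)` and `ρ` is a binary relation
on `Y`. -/
def BohrAP {n : ℕ} {X Y : Type*} [SubtractionMonoid Y]
    (I I' : Set (EuclideanSpace ℝ (Fin n)))
    (𝓑 : Set (Set X)) (ρ : Y → Y → Prop)
    (P : Set (↥I → Y)) (d : (↥I → Y) → (↥I → Y) → ℝ)
    (hII' : ∀ τ ∈ I', ∀ t ∈ I, t + τ ∈ I)
    (F : ↥I → X → Y) : Prop :=
  ∀ B ∈ 𝓑, ∀ ε : ℝ, 0 < ε → ∃ l : ℝ, 0 < l ∧ ∀ t₀ ∈ I',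
    ∃ τ, ∃ hτ : τ ∈ I', ‖τ - t₀‖ ≤ l ∧
      ∃ y : ↥I → X → Y,
        (∀ t : ↥I, ∀ x ∈ B, ρ (F t x) (y t x)) ∧
        (∀ x ∈ B,
          (fun t : ↥I =>
            F ⟨(t : EuclideanSpace ℝ (Fin n)) + τ, hII' τ hτ t t.2⟩ x - y t x) ∈ P) ∧
        (∀ x ∈ B,
          d (fun t : ↥I =>
            F ⟨(t : EuclideanSpace ℝ (Fin n)) + τ, hII' τ hτ t t.2⟩ x - y t x) 0 ≤ ε)

/-!
Given `ε`, take `l` for `ε / (2c)` and, for `s₀ = τ₁ - τ₂`, take `ε / (2c)`-periods `τ, τ'` within `l`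
of `τ₁, τ₂`. Since `ρ` is single-valued on the range of `F`, the two correcting functions `y, y'`
coincide, so `f - g = F(· + τ) - F(· + τ')` for the corresponding elements `f, g ∈ P`. Translation
invariance gives `‖f - g‖_P = d(f, g) ≤ ε / c`, and translating by `-τ'` with condition (P) yields
`F(· + (τ - τ')) - F ∈ P₁` with norm at most `ε`, while `τ - τ'` lies within `2l` of `s₀`.
-/

theorem sub_mem_of_image_add_eq {G : Type*} [AddGroup G] {I : Set G} {τ t : G}
    (h : (fun u => u + τ) '' I = I) (ht : t ∈ I) : t - τ ∈ I := by
  rwa [← h, Set.image_add_right, Set.mem_preimage, ← sub_eq_add_neg] at ht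

theorem sub_mem_of_add_mem_of_smul_mem {R α Y : Type*} [Ring R] [AddCommGroup Y] [Module R Y]
    {P : Set (α → Y)} (hPadd : ∀ f ∈ P, ∀ g ∈ P, f + g ∈ P) (hPsmul : ∀ c : R, ∀ f ∈ P, c • f ∈ P)
    {f g : α → Y} (hf : f ∈ P) (hg : g ∈ P) : f - g ∈ P := by
  simpa only [neg_one_smul, ← sub_eq_add_neg] using hPadd f hf _ (hPsmul (-1) g hg)

namespace IsMetricOn

variable {α Y : Type*} [AddCommGroup Y] {P : Set (α → Y)} {d : (α → Y) → (α → Y) → ℝ}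

theorem dist_sub_zero_le (hd : IsMetricOn P d) (hP0 : 0 ∈ P)
    (hdtrans : ∀ f g h : α → Y, f ∈ P → h ∈ P → f + g ∈ P → h + g ∈ P →
      d (f + g) (h + g) = d f h)
    {f g : α → Y} (hf : f ∈ P) (hg : g ∈ P) (hfg : f - g ∈ P) :
    d (f - g) 0 ≤ d f 0 + d g 0 := by
  have hshift : d (f - g) 0 = d f g := by
    simpa only [sub_add_cancel, zero_add] using
      (hdtrans (f - g) g 0 hfg hP0 (by rwa [sub_add_cancel]) (by rwa [zero_add])).symm
  calc d (f - g) 0 = d f g := hshift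
    _ ≤ d f 0 + d 0 g := hd.2.2.2 f hf 0 hP0 g hg
    _ = d f 0 + d g 0 := by rw [hd.2.2.1 0 hP0 g hg]

end IsMetricOn

section Translation

variable {E Y : Type*} [AddCommGroup E] [AddCommGroup Y] {I : Set E} {τ τ' : E}

theorem translate_sub_translate_comp_sub (G y : I → Y) (hτ : ∀ t ∈ I, t + τ ∈ I)
    (hτ' : ∀ t ∈ I, t + τ' ∈ I) (hs : ∀ t ∈ I, t - τ' ∈ I) (h : ∀ t ∈ I, t + (τ - τ') ∈ I) :
    (fun t : I => ((fun u : I => G ⟨u + τ, hτ u u.2⟩ - y u) -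
        fun u : I => G ⟨u + τ', hτ' u u.2⟩ - y u) ⟨t - τ', hs t t.2⟩) =
      fun t : I => G ⟨t + (τ - τ'), h t t.2⟩ - G t := by
  funext t
  simp only [Pi.sub_apply, sub_sub_sub_cancel_right]
  congr 2 <;> apply Subtype.ext
  · exact sub_add_comm _ _ _ |>.trans (add_comm _ _)
  · exact sub_add_cancel _ _

theorem translate_sub_self_mem_and_dist_le {ρ : Y → Y → Prop} {G y y' : I → Y}
    (hρ : ∀ t, ∃! z, ρ (G t) z) (hy : ∀ t, ρ (G t) (y t)) (hy' : ∀ t, ρ (G t) (y' t))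
    {P P₁ : Set (I → Y)} {d d₁ : (I → Y) → (I → Y) → ℝ} (hd : IsMetricOn P d) (hP0 : 0 ∈ P)
    (hPsub : ∀ f ∈ P, ∀ g ∈ P, f - g ∈ P)
    (hdtrans : ∀ f g h : I → Y, f ∈ P → h ∈ P → f + g ∈ P → h + g ∈ P →
      d (f + g) (h + g) = d f h)
    {c : ℝ} (hc : 0 ≤ c) (hs : ∀ t ∈ I, t - τ' ∈ I)
    (hcond : ∀ f ∈ P, (fun t : I => f ⟨t - τ', hs t t.2⟩) ∈ P₁ ∧
      d₁ (fun t : I => f ⟨t - τ', hs t t.2⟩) 0 ≤ c * d f 0)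
    (hτ : ∀ t ∈ I, t + τ ∈ I) (hτ' : ∀ t ∈ I, t + τ' ∈ I) (h : ∀ t ∈ I, t + (τ - τ') ∈ I)
    {δ : ℝ} (hf : (fun t : I => G ⟨t + τ, hτ t t.2⟩ - y t) ∈ P)
    (hfδ : d (fun t : I => G ⟨t + τ, hτ t t.2⟩ - y t) 0 ≤ δ)
    (hg : (fun t : I => G ⟨t + τ', hτ' t t.2⟩ - y' t) ∈ P)
    (hgδ : d (fun t : I => G ⟨t + τ', hτ' t t.2⟩ - y' t) 0 ≤ δ) :
    (fun t : I => G ⟨t + (τ - τ'), h t t.2⟩ - G t) ∈ P₁ ∧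
      d₁ (fun t : I => G ⟨t + (τ - τ'), h t t.2⟩ - G t) 0 ≤ c * (δ + δ) := by
  obtain rfl : y' = y := funext fun t => (hρ t).unique (hy' t) (hy t)
  obtain ⟨hmem, hle⟩ := hcond _ (hPsub _ hf _ hg)
  rw [translate_sub_translate_comp_sub G y' hτ hτ' hs h] at hmem hle
  exact ⟨hmem, hle.trans <| mul_le_mul_of_nonneg_left
    ((hd.dist_sub_zero_le hP0 hdtrans hf hg (hPsub _ hf _ hg)).trans (add_le_add hfδ hgδ)) hc⟩

end Translation

theorem stmt8_general {n : ℕ} {X Y : Type*}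
    [NormedAddCommGroup Y] [NormedSpace ℂ Y]
    (I I' : Set (EuclideanSpace ℝ (Fin n)))
    (hII' : ∀ τ ∈ I', ∀ t ∈ I, t + τ ∈ I)
    (hτI : ∀ τ ∈ I', (fun t => t + τ) '' I = I)
    (𝓑 : Set (Set X))
    (ρ : Y → Y → Prop) (F : ↥I → X → Y)
    (hρ : ∀ (t : ↥I) (x : X), ∃! y : Y, ρ (F t x) y)
    (P : Set (↥I → Y)) (d : (↥I → Y) → (↥I → Y) → ℝ)
    (hP0 : (0 : ↥I → Y) ∈ P) (hPd : IsMetricOn P d)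
    (hPadd : ∀ f ∈ P, ∀ g ∈ P, f + g ∈ P)
    (hPsmul : ∀ c : ℂ, ∀ f ∈ P, c • f ∈ P)
    (hdtrans : ∀ f g h : ↥I → Y, f ∈ P → h ∈ P → f + g ∈ P → h + g ∈ P →
      d (f + g) (h + g) = d f h)
    (P₁ : Set (↥I → Y)) (d₁ : (↥I → Y) → (↥I → Y) → ℝ)
    (c : ℝ) (hc : 0 < c)
    (hcondP : ∀ f ∈ P, ∀ τ ∈ I', ∀ hs : ∀ t ∈ I, t - τ ∈ I,
      (fun t : ↥I => f ⟨(t : EuclideanSpace ℝ (Fin n)) - τ, hs t t.2⟩) ∈ P₁ ∧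
      d₁ (fun t : ↥I => f ⟨(t : EuclideanSpace ℝ (Fin n)) - τ, hs t t.2⟩) 0 ≤ c * d f 0)
    (hF : BohrAP I I' 𝓑 ρ P d hII' F) :
    (∀ t ∈ I, ∀ τ₁ ∈ I', ∀ τ₂ ∈ I', t + (τ₁ - τ₂) ∈ I) ∧
    ∃ h : ∀ s ∈ {s : EuclideanSpace ℝ (Fin n) | ∃ τ₁ ∈ I', ∃ τ₂ ∈ I', s = τ₁ - τ₂},
        ∀ t ∈ I, t + s ∈ I,
      BohrAP I {s : EuclideanSpace ℝ (Fin n) | ∃ τ₁ ∈ I', ∃ τ₂ ∈ I', s = τ₁ - τ₂}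
        𝓑 (fun y₁ y₂ => y₁ = y₂) P₁ d₁ h F := by
  have hsub : ∀ τ ∈ I', ∀ t ∈ I, t - τ ∈ I := fun τ hτ _ => sub_mem_of_image_add_eq (hτI τ hτ)
  have hdiff : ∀ t ∈ I, ∀ τ₁ ∈ I', ∀ τ₂ ∈ I', t + (τ₁ - τ₂) ∈ I := fun t ht τ₁ hτ₁ τ₂ hτ₂ => by
    simpa only [add_sub_assoc] using hsub τ₂ hτ₂ _ (hII' τ₁ hτ₁ t ht)
  have hS : ∀ s ∈ {s : EuclideanSpace ℝ (Fin n) | ∃ τ₁ ∈ I', ∃ τ₂ ∈ I', s = τ₁ - τ₂},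
      ∀ t ∈ I, t + s ∈ I := by
    rintro _ ⟨τ₁, hτ₁, τ₂, hτ₂, rfl⟩ t ht
    exact hdiff t ht τ₁ hτ₁ τ₂ hτ₂
  refine ⟨hdiff, hS, fun B hB ε hε => ?_⟩
  obtain ⟨l, hl, hperiods⟩ := hF B hB (ε / (2 * c)) (by positivity)
  refine ⟨l + l, by positivity, ?_⟩
  rintro _ ⟨τ₁, hτ₁, τ₂, hτ₂, rfl⟩
  obtain ⟨τ, hτ, hττ₁, y, hy, hyP, hyd⟩ := hperiods τ₁ hτ₁
  obtain ⟨τ', hτ', hτ'τ₂, y', hy', hy'P, hy'd⟩ := hperiods τ₂ hτ₂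
  have hdist : ‖τ - τ' - (τ₁ - τ₂)‖ ≤ l + l := by
    rw [← dist_eq_norm] at hττ₁ hτ'τ₂ ⊢
    exact (dist_sub_sub_le τ τ' τ₁ τ₂).trans (add_le_add hττ₁ hτ'τ₂)
  have hε : c * (ε / (2 * c) + ε / (2 * c)) = ε := by field_simp; ring
  have key := fun x hx => translate_sub_self_mem_and_dist_le (hρ · x) (hy · x hx) (hy' · x hx)
    hPd hP0 (fun f hf g hg => sub_mem_of_add_mem_of_smul_mem hPadd hPsmul hf hg) hdtrans hc.le
    (hsub τ' hτ') (fun f hf => hcondP f hf τ' hτ' (hsub τ' hτ')) (hII' τ hτ) (hII' τ' hτ')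
    (hS _ ⟨τ, hτ, τ', hτ', rfl⟩) (hyP x hx) (hyd x hx) (hy'P x hx) (hy'd x hx)
  exact ⟨τ - τ', ⟨τ, hτ, τ', hτ', rfl⟩, hdist, F, fun _ _ _ => rfl,
    fun x hx => (key x hx).1, fun x hx => (key x hx).2.trans_eq hε⟩

/-- If `F` is Bohr `(𝓑,I',ρ,𝒫)`-almost periodic, `τ + I = I` for every `τ ∈ I'`, `ρ` is
single-valued on the range of `F`, `P` has a linear structure with translation invariant
metric and condition (P) holds, then `I + (I'−I') ⊆ I` and `F` is Bohr
`(𝓑,I'−I',𝐈,𝒫₁)`-almost periodic. -/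
theorem stmt8 {n : ℕ} {X Y : Type*}
    [NormedAddCommGroup X] [NormedSpace ℂ X] [CompleteSpace X]
    [NormedAddCommGroup Y] [NormedSpace ℂ Y] [CompleteSpace Y]
    (I I' : Set (EuclideanSpace ℝ (Fin n))) (hI : I.Nonempty) (hI' : I'.Nonempty)
    (hII' : ∀ τ ∈ I', ∀ t ∈ I, t + τ ∈ I)
    (hτI : ∀ τ ∈ I', (fun t => t + τ) '' I = I)
    (𝓑 : Set (Set X)) (h𝓑ne : 𝓑.Nonempty) (h𝓑 : ∀ B ∈ 𝓑, B.Nonempty)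
    (h𝓑union : ∀ x : X, ∃ B ∈ 𝓑, x ∈ B)
    (ρ : Y → Y → Prop) (F : ↥I → X → Y)
    (hρ : ∀ (t : ↥I) (x : X), ∃! y : Y, ρ (F t x) y)
    (P : Set (↥I → Y)) (d : (↥I → Y) → (↥I → Y) → ℝ)
    (hP0 : (0 : ↥I → Y) ∈ P) (hPd : IsMetricOn P d)
    (hPadd : ∀ f ∈ P, ∀ g ∈ P, f + g ∈ P)
    (hPsmul : ∀ c : ℂ, ∀ f ∈ P, c • f ∈ P)
    (hdtrans : ∀ f g h : ↥I → Y, f ∈ P → h ∈ P → f + g ∈ P → h + g ∈ P →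
      d (f + g) (h + g) = d f h)
    (P₁ : Set (↥I → Y)) (d₁ : (↥I → Y) → (↥I → Y) → ℝ)
    (hP₁0 : (0 : ↥I → Y) ∈ P₁) (hP₁d : IsMetricOn P₁ d₁)
    (c : ℝ) (hc : 0 < c)
    (hcondP : ∀ f ∈ P, ∀ τ ∈ I', ∀ hs : ∀ t ∈ I, t - τ ∈ I,
      (fun t : ↥I => f ⟨(t : EuclideanSpace ℝ (Fin n)) - τ, hs t t.2⟩) ∈ P₁ ∧
      d₁ (fun t : ↥I => f ⟨(t : EuclideanSpace ℝ (Fin n)) - τ, hs t t.2⟩) 0 ≤ c * d f 0)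
    (hF : BohrAP I I' 𝓑 ρ P d hII' F) :
    (∀ t ∈ I, ∀ τ₁ ∈ I', ∀ τ₂ ∈ I', t + (τ₁ - τ₂) ∈ I) ∧
    ∃ h : ∀ s ∈ {s : EuclideanSpace ℝ (Fin n) | ∃ τ₁ ∈ I', ∃ τ₂ ∈ I', s = τ₁ - τ₂},
        ∀ t ∈ I, t + s ∈ I,
      BohrAP I {s : EuclideanSpace ℝ (Fin n) | ∃ τ₁ ∈ I', ∃ τ₂ ∈ I', s = τ₁ - τ₂}
        𝓑 (fun y₁ y₂ => y₁ = y₂) P₁ d₁ h F :=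
  stmt8_general I I' hII' hτI 𝓑 ρ F hρ P d hP0 hPd hPadd hPsmul hdtrans P₁ d₁ c hc hcondP hF
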